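/- arXiv:1908.05594 — 4 statements merged into one kernel-verified Lean document; each statement's English description precedes it below -/
import Mathlib

section
/- Let p ≥ 5 be a prime, let a and n be positive integers with gcd(a,p) = 1, and let k be an odd integer with 1 ≤ k ≤ ap^n - 1. If v_p(s(ap^n, ap^n - k + 1)) ≤ 2n - 1, then v_p(s(ap^n, ap^n - k)) = v_p(s(ap^n, ap^n - k + 1)) + v_p(ap^n - k) + n. -/
/-!
Write `m = a p^n` and `c t = s(m, m - t)`, so that `∏_{i=1}^{m-1} (x + i) = ∑_t c t x^(m-1-t)`.
This polynomial is mapped to `(-1)^(m-1)` times itself by `x ↦ -x - m`, and comparing coefficients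
gives `c K = ∑_{t ≤ K} (-1)^t c t m^(K-t) C(m-1-t, K-t)`. For odd `K` the term `t = K` moves to the
left, so `2 c K` is a sum of multiples of `m`; hence `p^n ∣ c t` for odd `t`. Splitting off the
term `t = K - 1` leaves `2 c K = c (K-1) (m-K) m + R`, where every summand of `R` is divisible by
`p^(3n + v_p(m-K))`: the power `m^(K-t)` gives `(K-t) n` and the binomial coefficient gives
`v_p(m-K) - v_p((K-t)!)`, with `v_p((K-t)!) ≤ K-t-3` as `p ≥ 5`. This suffices when `t` is even,
as `K - t` is then odd and so `≥ 3`; for odd `t` the factor `c t` adds another `n`. Since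
`v_p(c (K-1)) ≤ 2n - 1`, the first term has the strictly smaller valuation
`v_p(c (K-1)) + v_p(m-K) + n`, which is therefore that of `c K`.
-/

/-- The (unsigned) Stirling number of the first kind `s(n,k)`, defined by
`x(x+1)(x+2)⋯(x+n-1) = Σ_{k=0}^{n} s(n,k) x^k`. -/
noncomputable def stirlingFirst (n k : ℕ) : ℕ := (ascPochhammer ℕ n).coeff k

open Polynomial Finset
open scoped Nat

theorem ascPochhammer_comp_neg_X_sub_natCast (R : Type*) [CommRing R] (N : ℕ) :
    (ascPochhammer R N).comp (-X - (N : R[X])) = (-1) ^ N * (ascPochhammer R N).comp (X + 1) := by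
  suffices h : (ascPochhammer ℤ N).comp (-X - (N : ℤ[X])) =
      (-1) ^ N * (ascPochhammer ℤ N).comp (X + 1) by
    simpa [map_comp, ascPochhammer_map] using congrArg (map (Int.castRingHom R)) h
  refine Polynomial.funext fun x => ?_
  rw [eval_comp, eval_mul, eval_comp, show eval x (-X - (N : ℤ[X])) = -(x + N) by
      simp only [eval_sub, eval_neg, eval_X, eval_natCast]; ring,
    ascPochhammer_eval_neg_eq_descPochhammer, descPochhammer_eval_eq_ascPochhammer]
  simp

theorem coeff_comp_neg_X_add_C {R : Type*} [CommRing R] (f : R[X]) (r : R) {n : ℕ}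
    (hn : f.natDegree < n) (i : ℕ) :
    (f.comp (-(X + C r))).coeff i =
      ∑ s ∈ range n, (-1) ^ s * f.coeff s * r ^ (s - i) * s.choose i := by
  rw [comp_eq_sum_left, sum_over_range' _ (by simp) n hn, finsetSum_coeff]
  refine sum_congr rfl fun s _ => ?_
  rw [neg_pow, show (-1 : R[X]) ^ s = C ((-1) ^ s) by simp, ← mul_assoc, ← C_mul, coeff_C_mul,
    coeff_X_add_C_pow]
  ring

theorem natCast_stirlingFirst_succ_succ (N i : ℕ) :
    (stirlingFirst (N + 1) (i + 1) : ℤ) = ((ascPochhammer ℤ N).comp (X + 1)).coeff i := by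
  rw [stirlingFirst, ← eq_natCast (Nat.castRingHom ℤ), ← coeff_map, ascPochhammer_map,
    ascPochhammer_succ_left, coeff_X_mul]

theorem ascPochhammer_comp_X_add_one_comp_neg (R : Type*) [CommRing R] (N : ℕ) :
    ((ascPochhammer R N).comp (X + 1)).comp (-(X + C ((N + 1 : ℕ) : R))) =
      (-1) ^ N * (ascPochhammer R N).comp (X + 1) := by
  rw [comp_assoc, ← ascPochhammer_comp_neg_X_sub_natCast]
  congr 1
  simp only [Nat.cast_add, Nat.cast_one, map_add, map_natCast, map_one, add_comp, X_comp,
    one_comp]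
  ring

noncomputable def reflectionTerm (m K t : ℕ) : ℕ :=
  stirlingFirst m (m - t) * m ^ (K - t) * (m - 1 - t).choose (K - t)

theorem coeff_ascPochhammer_comp_X_add_one (N i : ℕ) :
    ((ascPochhammer ℤ N).comp (X + 1)).coeff i = ∑ s ∈ range (N + 1), (-1) ^ (N + s) *
      ((ascPochhammer ℤ N).comp (X + 1)).coeff s * ((N + 1 : ℕ) : ℤ) ^ (s - i) * s.choose i := by
  set G := (ascPochhammer ℤ N).comp (X + 1)
  have hdeg : G.natDegree < N + 1 := natDegree_comp_le.trans_lt <| by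
    rw [← C_1, natDegree_X_add_C, mul_one, ascPochhammer_natDegree]
    omega
  have hsym : G = C ((-1) ^ N) * G.comp (-(X + C ((N + 1 : ℕ) : ℤ))) := by
    rw [ascPochhammer_comp_X_add_one_comp_neg, C_pow, C_neg, C_1, ← mul_assoc, ← pow_add,
      Even.neg_one_pow ⟨N, rfl⟩, one_mul]
  conv_lhs => rw [hsym]
  rw [coeff_C_mul, coeff_comp_neg_X_add_C _ _ hdeg, mul_sum]
  exact sum_congr rfl fun s _ => by ring

theorem stirlingFirst_sub_eq_sum {m K : ℕ} (hK : K < m) :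
    (stirlingFirst m (m - K) : ℤ) = ∑ t ∈ range (K + 1), (-1) ^ t * (reflectionTerm m K t : ℤ) := by
  obtain ⟨N, rfl⟩ : ∃ N, m = N + 1 := ⟨m - 1, by omega⟩
  set G := (ascPochhammer ℤ N).comp (X + 1)
  have hcoeff : ∀ t ≤ N, (stirlingFirst (N + 1) (N + 1 - t) : ℤ) = G.coeff (N - t) := fun t ht => by
    rw [show N + 1 - t = N - t + 1 by omega, natCast_stirlingFirst_succ_succ]
  calc (stirlingFirst (N + 1) (N + 1 - K) : ℤ)
      = ∑ t ∈ range (N + 1), (-1) ^ (N + (N - t)) * G.coeff (N - t) *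
          ((N + 1 : ℕ) : ℤ) ^ (N - t - (N - K)) * (N - t).choose (N - K) := by
        rw [hcoeff K (by omega), coeff_ascPochhammer_comp_X_add_one]
        exact (sum_range_reflect _ _).symm
    _ = ∑ t ∈ range (K + 1), (-1) ^ (N + (N - t)) * G.coeff (N - t) *
          ((N + 1 : ℕ) : ℤ) ^ (N - t - (N - K)) * (N - t).choose (N - K) := by
      refine (sum_subset (range_subset_range.mpr (by omega)) fun t htN htK => ?_).symm
      rw [mem_range] at htN htK
      rw [Nat.choose_eq_zero_of_lt (by omega)]
      simp
    _ = _ := by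
      refine sum_congr rfl fun t ht => ?_
      have htK : t ≤ K := Nat.lt_succ_iff.mp (mem_range.mp ht)
      rw [reflectionTerm, ← hcoeff t (by omega), show N - t - (N - K) = K - t by omega,
        show N + 1 - 1 - t = N - t by omega,
        Nat.choose_symm_of_eq_add (show N - t = N - K + (K - t) by omega),
        show N + (N - t) = 2 * (N - t) + t by omega, pow_add, pow_mul, neg_one_sq, one_pow, one_mul]
      push_cast
      ring

theorem stirlingFirst_pos {m i : ℕ} (hi : 0 < i) (him : i ≤ m) : 0 < stirlingFirst m i := by
  induction m generalizing i with
  | zero => omega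
  | succ m ih =>
    obtain ⟨j, rfl⟩ := Nat.exists_eq_add_of_le' hi
    rw [stirlingFirst, ascPochhammer_succ_right, mul_add, coeff_add, coeff_mul_X,
      ← C_eq_natCast, coeff_mul_C]
    rcases j with _ | j
    · rcases m with _ | m
      · simp
      · exact Nat.add_pos_right _ (Nat.mul_pos (ih (i := 1) (by omega) (by omega)) (by positivity))
    · exact Nat.add_pos_left (ih (by omega) (by omega)) _

theorem two_mul_stirlingFirst_sub_of_odd {m K : ℕ} (hK : K < m) (hKodd : Odd K) :
    2 * (stirlingFirst m (m - K) : ℤ) = ∑ t ∈ range K, (-1) ^ t * (reflectionTerm m K t : ℤ) := by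
  have h := stirlingFirst_sub_eq_sum hK
  rw [sum_range_succ, reflectionTerm.eq_1 m K K, Nat.sub_self, pow_zero, Nat.choose_zero_right,
    hKodd.neg_one_pow, mul_one, mul_one, neg_one_mul] at h
  linarith

theorem dvd_stirlingFirst_sub_of_odd {q m K : ℕ} (hq : Odd q) (hqm : q ∣ m) (hK : K < m)
    (hKodd : Odd K) : q ∣ stirlingFirst m (m - K) := by
  have hm : (m : ℤ) ∣ 2 * stirlingFirst m (m - K) := by
    rw [two_mul_stirlingFirst_sub_of_odd hK hKodd]
    refine dvd_sum fun t ht => Dvd.dvd.mul_left ?_ _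
    have hKt : K - t ≠ 0 := by rw [mem_range] at ht; omega
    rw [reflectionTerm]
    exact_mod_cast (dvd_pow_self m hKt).mul_left _ |>.mul_right _
  have hm' : m ∣ 2 * stirlingFirst m (m - K) := by exact_mod_cast hm
  exact (Nat.coprime_two_right.mpr hq).dvd_of_dvd_mul_left (hqm.trans hm')

theorem two_mul_stirlingFirst_sub_of_odd_eq_add {m K : ℕ} (hK : K < m) (hKodd : Odd K) :
    2 * (stirlingFirst m (m - K) : ℤ) =
      ((stirlingFirst m (m - (K - 1)) * ((m - K) * m) : ℕ) : ℤ) + ∑ t ∈ range (K - 1),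
        (-1) ^ t * (reflectionTerm m K t : ℤ) := by
  obtain ⟨K, rfl⟩ : ∃ K', K = K' + 1 := ⟨K - 1, by rcases hKodd with ⟨r, hr⟩; omega⟩
  have hKeven : Even K := by rcases hKodd with ⟨r, hr⟩; exact ⟨r, by omega⟩
  rw [two_mul_stirlingFirst_sub_of_odd hK hKodd, sum_range_succ, add_comm, Nat.add_sub_cancel,
    reflectionTerm.eq_1 m (K + 1) K, hKeven.neg_one_pow, show K + 1 - K = 1 by omega,
    Nat.choose_one_right, show m - 1 - K = m - (K + 1) by omega]
  push_cast
  ring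

theorem padicValNat_factorial_le_sub_three {p : ℕ} [Fact p.Prime] (hp : 5 ≤ p) (d : ℕ) :
    padicValNat p d ! ≤ d - 3 := by
  have hlegendre := sub_one_mul_padicValNat_factorial (p := p) d
  have hp4 : 4 * padicValNat p d ! ≤ (p - 1) * padicValNat p d ! := Nat.mul_le_mul_right _ (by omega)
  omega

theorem padicValNat_succ_sub_le_factorial_add_choose {p N d : ℕ} [Fact p.Prime] (hd : 0 < d)
    (hdN : d ≤ N) :
    padicValNat p (N + 1 - d) ≤ padicValNat p d ! + padicValNat p (N.choose d) := by
  rw [← padicValNat.mul d.factorial_ne_zero (Nat.choose_pos hdN).ne',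
    ← Nat.descFactorial_eq_factorial_mul_choose]
  have hdvd : N + 1 - d ∣ N.descFactorial d := by
    obtain ⟨e, rfl⟩ := Nat.exists_eq_add_of_le' hd
    rw [Nat.descFactorial_succ, show N + 1 - (e + 1) = N - e by omega]
    exact dvd_mul_right _ _
  exact (padicValNat_dvd_iff_le (Nat.descFactorial_pos.mpr hdN).ne').mp
    (pow_padicValNat_dvd.trans hdvd)

theorem padicValInt_add_eq_left {p : ℕ} [Fact p.Prime] {x y : ℤ} (hx : x ≠ 0)
    (hy : (p : ℤ) ^ (padicValInt p x + 1) ∣ y) : padicValInt p (x + y) = padicValInt p x := by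
  have hxy : ¬ (p : ℤ) ^ (padicValInt p x + 1) ∣ x + y := fun h => by
    have hdvd := dvd_sub h hy
    rw [add_sub_cancel_right, padicValInt_dvd_iff] at hdvd
    omega
  have hne : x + y ≠ 0 := fun h => hxy (h ▸ dvd_zero _)
  have hle : padicValInt p x ≤ padicValInt p (x + y) :=
    ((padicValInt_dvd_iff _ _).mp (dvd_add (padicValInt_dvd x)
      ((pow_dvd_pow _ (Nat.le_succ _)).trans hy))).resolve_left hne
  have hlt : ¬ padicValInt p x + 1 ≤ padicValInt p (x + y) := fun h =>
    hxy ((padicValInt_dvd_iff _ _).mpr (Or.inr h))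
  omega

theorem pow_dvd_stirlingFirst_mul_pow_mul_choose {p n m K t : ℕ} [Fact p.Prime] (hp : 5 ≤ p)
    (hn : 1 ≤ n) (hpm : p ^ n ∣ m) (hK : K < m) (hKodd : Odd K) (ht : t + 2 ≤ K) :
    p ^ (3 * n + padicValNat p (m - K)) ∣ reflectionTerm m K t := by
  rw [reflectionTerm]
  set d := K - t
  have hm : m ≠ 0 := by omega
  have hs : stirlingFirst m (m - t) ≠ 0 := (stirlingFirst_pos (by omega) (by omega)).ne'
  have hC : (m - 1 - t).choose d ≠ 0 := (Nat.choose_pos (by omega)).ne'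
  rw [padicValNat_dvd_iff_le (by positivity), padicValNat.mul (by positivity) hC,
    padicValNat.mul hs (by positivity), padicValNat.pow]
  have hvm : d * n ≤ d * padicValNat p m :=
    Nat.mul_le_mul_left d ((padicValNat_dvd_iff_le hm).mp hpm)
  have hbinom :=
    padicValNat_succ_sub_le_factorial_add_choose (p := p) (N := m - 1 - t) (d := d) (by omega)
      (by omega)
  rw [show m - 1 - t + 1 - d = m - K by omega] at hbinom
  have hfact := padicValNat_factorial_le_sub_three hp d
  rcases Nat.even_or_odd t with ht_even | ht_odd
  · have hd : 3 ≤ d := by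
      rcases ht_even with ⟨r, hr⟩
      rcases hKodd with ⟨s, hs⟩
      omega
    have hdn : (d - 3) * 1 ≤ (d - 3) * n := Nat.mul_le_mul_left _ hn
    have hdn' : d * n = (d - 3) * n + 3 * n := by rw [← add_mul, Nat.sub_add_cancel hd]
    omega
  · have hst : n ≤ padicValNat p (stirlingFirst m (m - t)) :=
      (padicValNat_dvd_iff_le hs).mp <| dvd_stirlingFirst_sub_of_odd
        ((Fact.out : p.Prime).odd_of_ne_two (by omega)).pow hpm (by omega) ht_odd
    have hdn : (d - 2) * 1 ≤ (d - 2) * n := Nat.mul_le_mul_left _ hn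
    have hdn' : d * n = (d - 2) * n + 2 * n := by rw [← add_mul, Nat.sub_add_cancel (by omega)]
    omega

theorem padicValNat_stirlingFirst_sub_of_odd {p m n K : ℕ} [Fact p.Prime] (hp : 5 ≤ p)
    (hn : 1 ≤ n) (hm : padicValNat p m = n) (hK : K < m) (hKodd : Odd K)
    (hval : padicValNat p (stirlingFirst m (m - (K - 1))) ≤ 2 * n - 1) :
    padicValNat p (stirlingFirst m (m - K)) =
      padicValNat p (stirlingFirst m (m - (K - 1))) + padicValNat p (m - K) + n := by
  have hK0 : 0 < K := hKodd.pos
  set M := stirlingFirst m (m - (K - 1)) * ((m - K) * m)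
  have hM : M ≠ 0 :=
    mul_ne_zero (stirlingFirst_pos (by omega) (by omega)).ne' (mul_ne_zero (by omega) (by omega))
  have hvM : padicValNat p M =
      padicValNat p (stirlingFirst m (m - (K - 1))) + padicValNat p (m - K) + n := by
    rw [padicValNat.mul (left_ne_zero_of_mul hM) (right_ne_zero_of_mul hM),
      padicValNat.mul (by omega : m - K ≠ 0) (by omega : m ≠ 0), hm, add_assoc]
  have hrest : (p : ℤ) ^ (padicValInt p M + 1) ∣ ∑ t ∈ range (K - 1), (-1) ^ t *
      (reflectionTerm m K t : ℤ) := by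
    rw [padicValInt.of_nat, hvM]
    refine (pow_dvd_pow _ (by omega : _ ≤ 3 * n + padicValNat p (m - K))).trans <|
      dvd_sum fun t ht => Dvd.dvd.mul_left ?_ _
    have hpm : p ^ n ∣ m := hm ▸ pow_padicValNat_dvd
    exact_mod_cast pow_dvd_stirlingFirst_mul_pow_mul_choose hp hn hpm hK hKodd
      (by rw [mem_range] at ht; omega)
  have h2 : padicValNat p 2 = 0 :=
    padicValNat.eq_zero_of_not_dvd fun h => by have := Nat.le_of_dvd two_pos h; omega
  calc padicValNat p (stirlingFirst m (m - K))
      = padicValInt p (2 * stirlingFirst m (m - K) : ℤ) := by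
        rw [← Nat.cast_ofNat, ← Nat.cast_mul, padicValInt.of_nat,
          padicValNat.mul two_ne_zero (stirlingFirst_pos (by omega) (by omega)).ne', h2, zero_add]
    _ = _ := by
        rw [two_mul_stirlingFirst_sub_of_odd_eq_add hK hKodd,
          padicValInt_add_eq_left (by exact_mod_cast hM) hrest, padicValInt.of_nat, hvM]

theorem stmt6_general (p a n k : ℕ) (hp : p.Prime) (hp5 : 5 ≤ p)
    (hn : 1 ≤ n) (hgcd : Nat.gcd a p = 1)
    (hkodd : Odd k) (hk2 : k ≤ a * p ^ n - 1)
    (hval : padicValNat p (stirlingFirst (a * p ^ n) (a * p ^ n - k + 1)) ≤ 2 * n - 1) :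
    padicValNat p (stirlingFirst (a * p ^ n) (a * p ^ n - k)) =
      padicValNat p (stirlingFirst (a * p ^ n) (a * p ^ n - k + 1)) +
        padicValNat p (a * p ^ n - k) + n := by
  have := Fact.mk hp
  have hk : 0 < k := hkodd.pos
  have hvm : padicValNat p (a * p ^ n) = n := by
    rw [padicValNat.mul (left_ne_zero_of_mul (by omega : a * p ^ n ≠ 0)) (by positivity),
      padicValNat.prime_pow, padicValNat.eq_zero_of_not_dvd
        ((Nat.Prime.coprime_iff_not_dvd hp).mp (Nat.coprime_comm.mp hgcd)), zero_add]
  rw [show a * p ^ n - k + 1 = a * p ^ n - (k - 1) by omega] at hval ⊢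
  exact padicValNat_stirlingFirst_sub_of_odd hp5 hn hvm (by omega) hkodd hval

theorem stmt6 (p a n k : ℕ) (hp : p.Prime) (hp5 : 5 ≤ p)
    (ha : 1 ≤ a) (hn : 1 ≤ n) (hgcd : Nat.gcd a p = 1)
    (hkodd : Odd k) (hk1 : 1 ≤ k) (hk2 : k ≤ a * p ^ n - 1)
    (hval : padicValNat p (stirlingFirst (a * p ^ n) (a * p ^ n - k + 1)) ≤ 2 * n - 1) :
    padicValNat p (stirlingFirst (a * p ^ n) (a * p ^ n - k)) =
      padicValNat p (stirlingFirst (a * p ^ n) (a * p ^ n - k + 1)) +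
        padicValNat p (a * p ^ n - k) + n :=
  stmt6_general p a n k hp hp5 hn hgcd hkodd hk2 hval
end

section
/- Let p ≥ 5 be a prime, let a and n be positive integers with gcd(a,p) = 1, and let k be an odd integer with 1 ≤ k ≤ ap^n - 1. If v_p(s(ap^n, ap^n - k + 1)) ≥ 2n, then v_p(s(ap^n, ap^n - k)) ≥ v_p(ap^n - k) + 3n. -/
open Polynomial Finset

lemma coeff_comp_neg_X {R : Type*} [CommRing R] (f : R[X]) (n : ℕ) :
    (f.comp (-X)).coeff n = (-1) ^ n * f.coeff n := by
  induction f using Polynomial.induction_on' with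
  | add f g hf hg => simp [add_comp, hf, hg, mul_add]
  | monomial k a =>
    have : (-X : R[X]) ^ k = C ((-1) ^ k) * X ^ k := by
      rw [neg_pow, C_pow, C_neg, C_1]
    rw [monomial_comp, this, ← mul_assoc, ← C_mul, coeff_C_mul_X_pow, coeff_monomial]
    by_cases h : n = k
    · subst h; simp [mul_comm]
    · simp [h, Ne.symm h]

lemma coeff_ascPochhammer_int (N j : ℕ) :
    (ascPochhammer ℤ N).coeff j = stirlingFirst N j := by
  rw [← ascPochhammer_map (Nat.castRingHom ℤ), coeff_map]; rfl

lemma coeff_ascPochhammer_comp_X_add_one_s7 (m i : ℕ) :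
    ((ascPochhammer ℤ m).comp (X + 1)).coeff i = stirlingFirst (m + 1) (i + 1) := by
  rw [← coeff_ascPochhammer_int, ascPochhammer_succ_left, coeff_X_mul]

lemma ascPochhammer_comp_X_add_one_comp_neg_X_add_C (m : ℕ) :
    ((ascPochhammer ℤ m).comp (X + 1)).comp (-(X + C ((m + 1 : ℕ) : ℤ))) =
      C ((-1) ^ m) * (ascPochhammer ℤ m).comp (X + 1) := by
  refine Polynomial.funext fun x => ?_
  have := ascPochhammer_eval_neg_eq_descPochhammer ℤ (x + (m : ℤ)) m
  rw [descPochhammer_eval_eq_ascPochhammer, add_sub_cancel_right] at this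
  simp only [eval_comp, eval_mul, eval_neg, eval_one, eval_add, eval_X, eval_C]
  rw [show -(x + ((m + 1 : ℕ) : ℤ)) + 1 = -(x + m) by push_cast; ring]
  exact this

/-- The coefficient of `X^M` in the symmetry `R(-X-N) = (-1)^(N-1) R(X)` of
`R = (X+1)⋯(X+N-1)`, with `N = M + t + 1`. -/
theorem stirlingFirst_reflection (M t : ℕ) :
    ∑ r ∈ range (t + 1), (-1 : ℤ) ^ r * ((M + r).choose M : ℤ) *
        stirlingFirst (M + t + 1) (M + r + 1) * ((M + t + 1 : ℕ) : ℤ) ^ r =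
      (-1) ^ t * stirlingFirst (M + t + 1) (M + 1) := by
  set m := M + t
  set Q := (ascPochhammer ℤ m).comp (X + 1)
  have hdeg : (hasseDeriv M (Q.comp (-X))).natDegree < t + 1 := by
    have hQ : (Q.comp (-X)).natDegree = m := by
      rw [natDegree_comp, natDegree_comp, ascPochhammer_natDegree, ← C_1, natDegree_X_add_C,
        natDegree_neg, natDegree_X, mul_one, mul_one]
    have := natDegree_hasseDeriv_le (Q.comp (-X)) M
    omega
  have h := congrArg (fun f => (-1) ^ M * coeff f M)
    (ascPochhammer_comp_X_add_one_comp_neg_X_add_C m)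
  rw [show -(X + C ((m + 1 : ℕ) : ℤ)) = (-X).comp (X + C ((m + 1 : ℕ) : ℤ)) by simp,
    ← comp_assoc, ← taylor_apply, taylor_coeff, eval_eq_sum_range' hdeg, mul_sum,
    coeff_C_mul, coeff_ascPochhammer_comp_X_add_one_s7, ← mul_assoc, ← pow_add,
    show M + m = 2 * M + t by omega, pow_add, pow_mul, neg_one_sq, one_pow, one_mul] at h
  rw [← h]
  refine sum_congr rfl fun r _ => ?_
  rw [hasseDeriv_coeff, coeff_comp_neg_X, coeff_ascPochhammer_comp_X_add_one_s7, add_comm r M,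
    pow_add]
  have hM : ((-1 : ℤ) ^ M) * (-1) ^ M = 1 := by rw [← mul_pow, neg_one_mul, neg_neg, one_pow]
  linear_combination (-(-1) ^ r * ((M + r).choose M : ℤ) * stirlingFirst (m + 1) (M + r + 1) *
    ((m + 1 : ℕ) : ℤ) ^ r) * hM

lemma stirlingFirst_succ_succ (n m : ℕ) :
    stirlingFirst (n + 1) (m + 1) = stirlingFirst n m + n * stirlingFirst n (m + 1) := by
  simp only [stirlingFirst, ascPochhammer_succ_right, mul_add, coeff_add, coeff_mul_X,
    coeff_mul_natCast, Nat.cast_id, mul_comm]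

lemma stirlingFirst_pos_s7 {N j : ℕ} (hj : 0 < j) (hjN : j ≤ N) : 0 < stirlingFirst N j := by
  induction N generalizing j with
  | zero => omega
  | succ n ih =>
    obtain ⟨m, rfl⟩ : ∃ m, j = m + 1 := ⟨j - 1, by omega⟩
    rw [stirlingFirst_succ_succ]
    rcases Nat.eq_zero_or_pos m with rfl | hm
    · rcases Nat.eq_zero_or_pos n with rfl | hn
      · simp [stirlingFirst]
      · have := ih Nat.one_pos hn
        positivity
    · have := ih hm (by omega)
      omega

lemma dvd_of_intCast_dvd_two_mul_of_odd {d s : ℕ} (hd : Odd d) (h : (d : ℤ) ∣ 2 * s) :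
    d ∣ s :=
  (Nat.coprime_two_right.mpr hd).dvd_of_dvd_mul_left (by exact_mod_cast h)

theorem stirlingFirst_dvd_of_odd_sub {d N j : ℕ} (hd : Odd d) (hdN : d ∣ N) (hj : 0 < j)
    (hNj : Odd (N - j)) : d ∣ stirlingFirst N j := by
  obtain ⟨M, rfl⟩ : ∃ M, j = M + 1 := ⟨j - 1, by omega⟩
  obtain ⟨t, rfl⟩ : ∃ t, N = M + t + 1 := ⟨N - (M + 1), by grind⟩
  rw [show M + t + 1 - (M + 1) = t by omega] at hNj
  have h := stirlingFirst_reflection M t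
  rw [sum_range_succ', hNj.neg_one_pow] at h
  refine dvd_of_intCast_dvd_two_mul_of_odd hd ?_
  have hsum : (d : ℤ) ∣ ∑ r ∈ range t, (-1 : ℤ) ^ (r + 1) * ((M + (r + 1)).choose M : ℤ) *
      stirlingFirst (M + t + 1) (M + (r + 1) + 1) * ((M + t + 1 : ℕ) : ℤ) ^ (r + 1) :=
    dvd_sum fun r _ => Dvd.dvd.mul_left
      ((Int.natCast_dvd_natCast.mpr hdN).trans (dvd_pow_self _ r.succ_ne_zero)) _
  simp only [pow_zero, add_zero, Nat.choose_self, Nat.cast_one, one_mul, mul_one,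
    neg_one_mul] at h
  rw [eq_sub_of_add_eq h] at hsum
  exact (dvd_neg.mpr hsum).trans (dvd_of_eq (by ring))

lemma succ_dvd_choose_mul_factorial (M ρ : ℕ) (hρ : 0 < ρ) :
    M + 1 ∣ (M + ρ).choose M * ρ.factorial := by
  have h := Nat.choose_succ_right_eq (M + ρ) M
  rw [Nat.add_sub_cancel_left] at h
  exact (Dvd.intro_left _ h).trans (Nat.mul_dvd_mul_left _ (Nat.dvd_factorial hρ le_rfl))

lemma pow_dvd_choose_mul_mul_pow {p n N M ρ S : ℕ} (hp : p.Prime) (hp5 : 5 ≤ p) (hn : 1 ≤ n)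
    (hN : p ^ n ∣ N) (hρ : 2 ≤ ρ) (hS : Even ρ → p ^ n ∣ S) :
    p ^ (3 * n + padicValNat p (M + 1)) ∣ (M + ρ).choose M * S * N ^ ρ := by
  have : Fact p.Prime := ⟨hp⟩
  by_cases h0 : (M + ρ).choose M * S * N ^ ρ = 0
  · rw [h0]; exact dvd_zero _
  obtain ⟨hC, hS0⟩ := mul_ne_zero_iff.mp (left_ne_zero_of_mul h0)
  have hN0 : N ≠ 0 := by
    rintro rfl
    exact h0 (by rw [zero_pow (by omega), mul_zero])
  rw [padicValNat_dvd_iff_le h0, padicValNat.mul (mul_ne_zero hC hS0) (pow_ne_zero _ hN0),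
    padicValNat.mul hC hS0, padicValNat.pow]
  have hchoose : padicValNat p (M + 1) ≤
      padicValNat p ((M + ρ).choose M) + padicValNat p ρ.factorial := by
    rw [← padicValNat.mul hC (Nat.factorial_ne_zero ρ)]
    exact (padicValNat_dvd_iff_le (mul_ne_zero hC (Nat.factorial_ne_zero ρ))).mp
      (pow_padicValNat_dvd.trans (succ_dvd_choose_mul_factorial M ρ (by omega)))
  have hlegendre : (p - 1) * padicValNat p ρ.factorial ≤ ρ := by
    rw [sub_one_mul_padicValNat_factorial]; omega
  have hvN : n ≤ padicValNat p N := (padicValNat_dvd_iff_le hN0).mp hN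
  have hvS : Even ρ → n ≤ padicValNat p S := fun h => (padicValNat_dvd_iff_le hS0).mp (hS h)
  have h4 : 4 * padicValNat p ρ.factorial ≤ ρ :=
    (Nat.mul_le_mul_right _ (by omega)).trans hlegendre
  have hρN : ρ * n ≤ ρ * padicValNat p N := Nat.mul_le_mul_left ρ hvN
  obtain rfl | rfl | hρ4 : ρ = 2 ∨ ρ = 3 ∨ 4 ≤ ρ := by omega
  · have := hvS even_two
    omega
  · omega
  · have : 3 * n + ρ ≤ ρ * n + 3 := by nlinarith
    omega

theorem pow_dvd_mul_stirlingFirst_succ_sub_two_mul_stirlingFirst {p n N k : ℕ} (hp : p.Prime)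
    (hp5 : 5 ≤ p) (hn : 1 ≤ n) (hN : p ^ n ∣ N) (hk : Odd k) (hkN : k < N) :
    (p : ℤ) ^ (3 * n + padicValNat p (N - k)) ∣
      (N : ℤ) * (N - k : ℕ) * stirlingFirst N (N - k + 1) - 2 * stirlingFirst N (N - k) := by
  obtain ⟨M, rfl⟩ : ∃ M, N = M + k + 1 := ⟨N - k - 1, by omega⟩
  obtain ⟨l, rfl⟩ : ∃ l, k = l + 1 := ⟨k - 1, by have := hk.pos; omega⟩
  rw [show M + (l + 1) + 1 - (l + 1) = M + 1 by omega]
  have hpodd : Odd (p ^ n) := (hp.odd_of_ne_two (by omega)).pow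
  have h := stirlingFirst_reflection M (l + 1)
  rw [sum_range_succ', sum_range_succ', hk.neg_one_pow] at h
  have hsum : (p : ℤ) ^ (3 * n + padicValNat p (M + 1)) ∣ ∑ r ∈ range l,
      (-1 : ℤ) ^ (r + 1 + 1) * ((M + (r + 1 + 1)).choose M : ℤ) *
        stirlingFirst (M + (l + 1) + 1) (M + (r + 1 + 1) + 1) *
        ((M + (l + 1) + 1 : ℕ) : ℤ) ^ (r + 1 + 1) := by
    refine dvd_sum fun r hr => ?_
    have hterm := pow_dvd_choose_mul_mul_pow (M := M) (S := stirlingFirst (M + (l + 1) + 1)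
      (M + (r + 1 + 1) + 1)) hp hp5 hn hN (le_add_self : 2 ≤ r + 2) fun hr2 =>
        stirlingFirst_dvd_of_odd_sub hpodd hN (by omega) (by
          rw [show M + (l + 1) + 1 - (M + (r + 1 + 1) + 1) = l + 1 - (r + 2) by omega]
          exact Nat.Odd.sub_even (by simp at hr; omega) hk hr2)
    rw [mul_assoc, mul_assoc, ← mul_assoc (((M + (r + 1 + 1)).choose M : ℕ) : ℤ)]
    exact_mod_cast (Int.natCast_dvd_natCast.mpr hterm).mul_left _
  simp only [pow_zero, add_zero, Nat.choose_self, Nat.cast_one, one_mul, mul_one,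
    Nat.choose_succ_self_right] at h
  rw [eq_sub_of_add_eq (eq_sub_of_add_eq h)] at hsum
  exact hsum.trans (dvd_of_eq (by push_cast; ring))

theorem stmt7_general (p a n k : ℕ) (hp : p.Prime) (hp5 : 5 ≤ p)
    (hn : 1 ≤ n) (hkodd : Odd k) (hk2 : k ≤ a * p ^ n - 1)
    (hval : 2 * n ≤ padicValNat p (stirlingFirst (a * p ^ n) (a * p ^ n - k + 1))) :
    padicValNat p (stirlingFirst (a * p ^ n) (a * p ^ n - k)) ≥
      padicValNat p (a * p ^ n - k) + 3 * n := by
  have : Fact p.Prime := ⟨hp⟩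
  set N := a * p ^ n
  have hkN : k < N := by have := hkodd.pos; omega
  set v := padicValNat p (N - k)
  have hN : p ^ n ∣ N := dvd_mul_left _ _
  have hprod : p ^ (3 * n + v) ∣ N * (N - k) * stirlingFirst N (N - k + 1) := by
    rw [show 3 * n + v = n + v + 2 * n by ring, pow_add, pow_add]
    exact mul_dvd_mul (mul_dvd_mul hN pow_padicValNat_dvd)
      ((pow_dvd_pow p hval).trans pow_padicValNat_dvd)
  have htwo : (p : ℤ) ^ (3 * n + v) ∣ 2 * stirlingFirst N (N - k) := by
    have := dvd_sub (Int.natCast_dvd_natCast.mpr hprod)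
      (pow_dvd_mul_stirlingFirst_succ_sub_two_mul_stirlingFirst hp hp5 hn hN hkodd hkN)
    push_cast at this
    rwa [sub_sub_cancel] at this
  have hdvd := dvd_of_intCast_dvd_two_mul_of_odd (hp.odd_of_ne_two (by omega)).pow
    (by exact_mod_cast htwo)
  have := (padicValNat_dvd_iff_le (stirlingFirst_pos_s7 (by omega) (by omega)).ne').mp hdvd
  omega

theorem stmt7 (p a n k : ℕ) (hp : p.Prime) (hp5 : 5 ≤ p)
    (ha : 1 ≤ a) (hn : 1 ≤ n) (hgcd : Nat.gcd a p = 1)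
    (hkodd : Odd k) (hk1 : 1 ≤ k) (hk2 : k ≤ a * p ^ n - 1)
    (hval : 2 * n ≤ padicValNat p (stirlingFirst (a * p ^ n) (a * p ^ n - k + 1))) :
    padicValNat p (stirlingFirst (a * p ^ n) (a * p ^ n - k)) ≥
      padicValNat p (a * p ^ n - k) + 3 * n :=
  stmt7_general p a n k hp hp5 hn hkodd hk2 hval
end

section
/- Let p ≥ 5 be a prime and let k be an integer with 2 ≤ k ≤ p-2. Then v_p(s(p, k)) ≥ 1 + ε_{k-1}, with equality holding if and only if v_p(B_{p-1-2⌊k/2⌋}) = 0, where ε_{k-1} = 0 if k-1 is even and ε_{k-1} = 1 if k-1 is odd. -/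
open Finset

theorem AddValuation.min_map_eq_of_le_map_sub {R Γ₀ : Type*} [Ring R]
    [LinearOrderedAddCommMonoidWithTop Γ₀] (v : AddValuation R Γ₀) {x y : R} {g : Γ₀}
    (h : g ≤ v (x - y)) : min (v x) g = min (v y) g := by
  have key : ∀ a b : R, g ≤ v (a - b) → min (v b) g ≤ min (v a) g := fun a b hab =>
    le_min ((min_le_min_left _ hab).trans (by simpa using v.map_add b (a - b))) (min_le_right _ _)
  exact le_antisymm (key y x (by rwa [v.map_sub_swap])) (key x y h)

open Polynomial in
theorem Polynomial.coeff_comp_X_add_C {R : Type*} [CommSemiring R] (f : R[X]) (r : R) (j : ℕ)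
    {N : ℕ} (hN : f.natDegree - j < N) :
    (f.comp (X + C r)).coeff j =
      ∑ i ∈ range N, ((i + j).choose j) * f.coeff (i + j) * r ^ i := by
  rw [← taylor_apply, taylor_coeff,
    eval_eq_sum_range' ((natDegree_hasseDeriv_le f j).trans_lt hN)]
  simp [hasseDeriv_coeff]

theorem bernoulli_ne_zero_of_even {n : ℕ} (hn : Even n) : bernoulli n ≠ 0 := by
  obtain ⟨k, rfl⟩ := hn
  rcases eq_or_ne k 0 with rfl | hk
  · simp
  intro h0
  have hz := riemannZeta_two_mul_nat hk
  rw [← two_mul] at h0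
  rw [h0] at hz
  refine riemannZeta_ne_zero_of_one_lt_re ?_ (by simpa using hz)
  norm_cast
  omega

theorem ZMod.sum_range_natCast {M : Type*} [AddCommMonoid M] (n : ℕ) [NeZero n]
    (f : ZMod n → M) :
    ∑ i ∈ range n, f i = ∑ x : ZMod n, f x :=
  sum_nbij' Nat.cast ZMod.val (by simp) (fun x _ => by simpa using ZMod.val_lt x)
    (fun i hi => ZMod.val_cast_of_lt (mem_range.mp hi)) (fun x _ => ZMod.natCast_zmod_val x)
    (fun _ _ => rfl)

-- Unlike `padicValRat`, this gives `0` the valuation `⊤`.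
noncomputable def padicAddVal (p : ℕ) [Fact p.Prime] : AddValuation ℚ (WithTop ℤ) :=
  Padic.addValuation.comap (Rat.castHom ℚ_[p])

section padicAddVal

variable {p : ℕ} [hp : Fact p.Prime]

local notation "ν" => padicAddVal p

theorem padicAddVal_of_ne_zero {a : ℚ} (ha : a ≠ 0) : ν a = padicValRat p a := by
  change Padic.addValuation (a : ℚ_[p]) = _
  rw [Padic.addValuation.apply (by exact_mod_cast ha), Padic.valuation_ratCast]

theorem padicAddVal_self : ν p = 1 := by
  rw [padicAddVal_of_ne_zero (by exact_mod_cast hp.out.ne_zero), padicValRat.self hp.out.one_lt]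
  rfl

theorem padicAddVal_intCast_nonneg (m : ℤ) : 0 ≤ ν m := by
  rcases eq_or_ne m 0 with rfl | hm
  · simp
  · rw [padicAddVal_of_ne_zero (by exact_mod_cast hm), padicValRat.of_int]
    exact_mod_cast Nat.zero_le _

theorem padicAddVal_natCast_nonneg (n : ℕ) : 0 ≤ ν n := by
  exact_mod_cast padicAddVal_intCast_nonneg (n : ℤ)

theorem padicAddVal_natCast_of_ne_zero {n : ℕ} (hn : n ≠ 0) :
    ν n = (padicValNat p n : ℤ) := by
  rw [padicAddVal_of_ne_zero (by exact_mod_cast hn), padicValRat.of_nat]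

theorem padicAddVal_natCast_of_not_dvd {n : ℕ} (h : ¬ p ∣ n) : ν n = 0 := by
  have hn : (n : ℚ) ≠ 0 := by rintro h0; exact h (by simp_all)
  rw [padicAddVal_of_ne_zero hn, padicValRat.of_nat, padicValNat.eq_zero_of_not_dvd h]
  rfl

theorem padicAddVal_natCast_of_pos_of_lt {n : ℕ} (h0 : 0 < n) (hn : n < p) : ν n = 0 :=
  padicAddVal_natCast_of_not_dvd (Nat.not_dvd_of_pos_of_lt h0 hn)

theorem padicAddVal_pow_self (k : ℕ) : ν ((p : ℚ) ^ k) = ((k : ℤ) : WithTop ℤ) := by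
  rw [AddValuation.map_pow, padicAddVal_self, nsmul_one]
  rfl

theorem padicAddVal_neg_one_pow (n : ℕ) : ν ((-1) ^ n) = 0 := by
  simp [AddValuation.map_pow, AddValuation.map_neg]

end padicAddVal

noncomputable def esymmUpTo (n j : ℕ) : ℚ :=
  MvPolynomial.aeval (fun i : Fin n => ((i : ℕ) + 1 : ℚ)) (MvPolynomial.esymm (Fin n) ℚ j)

noncomputable def powerSumUpTo (n m : ℕ) : ℚ := ∑ i : Fin n, ((i : ℕ) + 1 : ℚ) ^ m

open Polynomial in
noncomputable def shiftedPochhammer (n : ℕ) : ℚ[X] :=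
  ∏ i : Fin n, (X + C ((i : ℕ) + 1 : ℚ))

section Symmetric

open Polynomial

variable {n : ℕ}

theorem esymmUpTo_eq_sum (j : ℕ) :
    esymmUpTo n j =
      ∑ t ∈ (univ : Finset (Fin n)).powersetCard j, ∏ i ∈ t, ((i : ℕ) + 1 : ℚ) := by
  rw [esymmUpTo, MvPolynomial.aeval_esymm_eq_multiset_esymm, Finset.esymm_map_val]

theorem esymmUpTo_zero : esymmUpTo n 0 = 1 := by
  simp [esymmUpTo_eq_sum]

theorem esymmUpTo_pos {j : ℕ} (hj : j ≤ n) : 0 < esymmUpTo n j := by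
  rw [esymmUpTo_eq_sum]
  exact sum_pos (fun t _ => prod_pos fun i _ => by positivity)
    (powersetCard_nonempty.mpr (by simpa using hj))

theorem shiftedPochhammer_coeff {m : ℕ} (hm : m ≤ n) :
    (shiftedPochhammer n).coeff m = esymmUpTo n (n - m) := by
  rw [shiftedPochhammer, prod_X_add_C_coeff _ _ (by simpa using hm), esymmUpTo_eq_sum,
    card_univ, Fintype.card_fin]

theorem ascPochhammer_comp_X_add_one (n : ℕ) :
    (ascPochhammer ℚ n).comp (X + 1) = shiftedPochhammer n := by
  induction n with
  | zero => simp [shiftedPochhammer]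
  | succ n ih =>
    rw [ascPochhammer_succ_right, mul_comp, ih, shiftedPochhammer, shiftedPochhammer,
      Fin.prod_univ_castSucc]
    simp [add_assoc, add_comm (1 : ℚ[X])]

theorem stirlingFirst_eq_esymmUpTo {k : ℕ} (hk1 : 1 ≤ k) (hk : k ≤ n) :
    (stirlingFirst n k : ℚ) = esymmUpTo (n - 1) (n - k) := by
  obtain ⟨n, rfl⟩ := Nat.exists_eq_add_of_le' (hk1.trans hk)
  obtain ⟨k, rfl⟩ := Nat.exists_eq_add_of_le' hk1
  have hmap :
      (stirlingFirst (n + 1) (k + 1) : ℚ) = (ascPochhammer ℚ (n + 1)).coeff (k + 1) := by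
    rw [stirlingFirst, ← ascPochhammer_map (Nat.castRingHom ℚ), coeff_map]; rfl
  rw [hmap, ascPochhammer_succ_left, ascPochhammer_comp_X_add_one, coeff_X_mul,
    shiftedPochhammer_coeff (by omega), Nat.add_sub_cancel, Nat.add_sub_add_right]

theorem stirlingFirst_ne_zero {k : ℕ} (hk1 : 1 ≤ k) (hk : k ≤ n) :
    stirlingFirst n k ≠ 0 := by
  have h := stirlingFirst_eq_esymmUpTo hk1 hk ▸ esymmUpTo_pos (n := n - 1) (j := n - k) (by omega)
  exact_mod_cast h.ne'

theorem mul_esymmUpTo_eq_sum (j : ℕ) :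
    j * esymmUpTo n j = (-1) ^ (j + 1) *
      ∑ a ∈ antidiagonal j with a.1 < j, (-1) ^ a.1 * esymmUpTo n a.1 * powerSumUpTo n a.2 := by
  have h := congrArg (MvPolynomial.aeval fun i : Fin n => ((i : ℕ) + 1 : ℚ))
    (MvPolynomial.mul_esymm_eq_sum (Fin n) ℚ j)
  simpa [MvPolynomial.psum, esymmUpTo, powerSumUpTo] using h

theorem shiftedPochhammer_comp_X_sub (hn : Even n) :
    (shiftedPochhammer n).comp (X - C (n + 1 : ℚ)) = (shiftedPochhammer n).comp (-X) := by
  have hrev (i : Fin n) :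
      (X + C (((Fin.revPerm i : Fin n) : ℕ) + 1 : ℚ)).comp (X - C (n + 1 : ℚ)) =
        -(X + C ((i : ℕ) + 1 : ℚ)).comp (-X) := by
    have : (((Fin.revPerm i : Fin n) : ℕ) : ℚ) = n - (i + 1) := by
      rw [Fin.revPerm_apply, Fin.val_rev, Nat.cast_sub (by omega)]; push_cast; ring
    rw [add_comp, X_comp, C_comp, add_comp, X_comp, C_comp, this]
    simp only [map_sub, map_add, map_one]
    ring
  rw [shiftedPochhammer, Polynomial.prod_comp, Polynomial.prod_comp,
    ← Equiv.prod_comp Fin.revPerm]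
  simp only [hrev, prod_neg, card_univ, Fintype.card_fin, hn.neg_one_pow, one_mul]

theorem mul_esymmUpTo_sub_powerSumUpTo {j : ℕ} (hj : j ≠ 0) :
    j * esymmUpTo n j - (-1) ^ (j + 1) * powerSumUpTo n j =
      (-1) ^ (j + 1) * ∑ a ∈ Ico 1 j, (-1) ^ a * esymmUpTo n a * powerSumUpTo n (j - a) := by
  rw [mul_esymmUpTo_eq_sum, sum_filter, Nat.sum_antidiagonal_eq_sum_range_succ_mk,
    sum_range_succ, if_neg (lt_irrefl j), add_zero, range_eq_Ico,
    sum_eq_sum_Ico_succ_bot (Nat.pos_of_ne_zero hj), if_pos (Nat.pos_of_ne_zero hj)]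
  simp only [pow_zero, one_mul, esymmUpTo_zero, Nat.sub_zero, zero_add]
  rw [mul_add, add_sub_cancel_left]
  congr 1
  exact sum_congr rfl fun a ha => if_pos (mem_Ico.mp ha).2

theorem shiftedPochhammer_coeff_reflect (hn : Even n) (m : ℕ) :
    ∑ i ∈ range (n - m + 1),
      ((i + m).choose m) * (shiftedPochhammer n).coeff (i + m) * (-(n + 1 : ℚ)) ^ i =
      (-1) ^ m * (shiftedPochhammer n).coeff m := by
  have h := congrArg (coeff · m) (shiftedPochhammer_comp_X_sub hn)
  have hdeg : (shiftedPochhammer n).natDegree = n := by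
    rw [shiftedPochhammer, natDegree_prod_of_monic _ _ fun i _ => monic_X_add_C _]
    simp only [natDegree_X_add_C, sum_const, card_univ, Fintype.card_fin, smul_eq_mul, mul_one]
  rw [sub_eq_add_neg, ← C_neg, coeff_comp_X_add_C _ _ _ (N := n - m + 1) (by omega),
    show (-X : ℚ[X]) = C (-1) * X by simp, comp_C_mul_X_coeff] at h
  simpa [mul_comm] using h

end Symmetric

theorem powerSumUpTo_eq_sum_range {n m : ℕ} (hm : m ≠ 0) :
    powerSumUpTo n m = ∑ i ∈ range (n + 1), (i : ℚ) ^ m := by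
  rw [sum_range_succ', powerSumUpTo, Fin.sum_univ_eq_sum_range (fun i => ((i : ℚ) + 1) ^ m)]
  simp [hm]

theorem powerSumUpTo_sub_mul_bernoulli {n m : ℕ} (hm : m ≠ 0) :
    powerSumUpTo n m - ((n + 1 : ℕ) : ℚ) * bernoulli m =
      ∑ i ∈ range m,
        bernoulli i * ((m + 1).choose i) * ((n + 1 : ℕ) : ℚ) ^ (m + 1 - i) / (m + 1) := by
  rw [powerSumUpTo_eq_sum_range hm, sum_range_pow, sum_range_succ, Nat.choose_succ_self_right,
    Nat.add_sub_cancel_left]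
  push_cast
  field_simp
  ring

section Estimates

variable {p : ℕ} [hp : Fact p.Prime]

local notation "ν" => padicAddVal p

theorem one_le_padicAddVal_powerSumUpTo {m : ℕ} (hm0 : m ≠ 0) (hm : m < p - 1) :
    1 ≤ ν (powerSumUpTo (p - 1) m) := by
  have hsum : ((∑ i ∈ range p, (i : ℤ) ^ m : ℤ) : ZMod p) = 0 := by
    push_cast
    rw [ZMod.sum_range_natCast p (· ^ m)]
    exact FiniteField.sum_pow_lt_card_sub_one (K := ZMod p) m (by rwa [ZMod.card])
  obtain ⟨t, ht⟩ := (ZMod.intCast_zmod_eq_zero_iff_dvd _ p).mp hsum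
  have hS : powerSumUpTo (p - 1) m = p * t := by
    rw [powerSumUpTo_eq_sum_range hm0, Nat.sub_add_cancel hp.out.one_le]
    exact_mod_cast ht
  rw [hS, AddValuation.map_mul, padicAddVal_self]
  exact le_add_of_nonneg_right (by exact_mod_cast padicAddVal_intCast_nonneg t)

theorem two_le_padicAddVal_mul_esymmUpTo_sub_of_forall {j : ℕ} (hj1 : 1 ≤ j) (hj : j ≤ p - 2)
    (hlow : ∀ a ∈ Ico 1 j, 1 ≤ ν (esymmUpTo (p - 1) a)) :
    2 ≤ ν (j * esymmUpTo (p - 1) j - (-1) ^ (j + 1) * powerSumUpTo (p - 1) j) := by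
  rw [mul_esymmUpTo_sub_powerSumUpTo (by omega), AddValuation.map_mul, padicAddVal_neg_one_pow,
    zero_add]
  refine AddValuation.map_le_sum _ fun a ha => ?_
  have ha' := mem_Ico.mp ha
  rw [AddValuation.map_mul, AddValuation.map_mul, padicAddVal_neg_one_pow, zero_add]
  calc (2 : WithTop ℤ) = 1 + 1 := by norm_num
    _ ≤ _ := add_le_add (hlow a ha) (one_le_padicAddVal_powerSumUpTo (by omega) (by omega))

theorem one_le_padicAddVal_esymmUpTo {j : ℕ} (hj1 : 1 ≤ j) (hj : j ≤ p - 2) :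
    1 ≤ ν (esymmUpTo (p - 1) j) := by
  induction j using Nat.strong_induction_on with
  | _ j ih =>
  have hdiff := two_le_padicAddVal_mul_esymmUpTo_sub_of_forall hj1 hj fun a ha =>
    ih a (mem_Ico.mp ha).2 (mem_Ico.mp ha).1 (by have := (mem_Ico.mp ha).2; omega)
  have hS : 1 ≤ ν ((-1) ^ (j + 1) * powerSumUpTo (p - 1) j) := by
    rw [AddValuation.map_mul, padicAddVal_neg_one_pow, zero_add]
    exact one_le_padicAddVal_powerSumUpTo (by omega) (by omega)
  have h := AddValuation.map_le_add _ (one_le_two.trans hdiff) hS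
  rwa [sub_add_cancel, AddValuation.map_mul, padicAddVal_natCast_of_pos_of_lt (by omega) (by omega),
    zero_add] at h

theorem two_le_padicAddVal_powerSumUpTo_sub_mul_bernoulli {m : ℕ} (hm0 : m ≠ 0)
    (hm : m ≤ p - 2) (hB : ∀ i < m, 0 ≤ ν (bernoulli i)) :
    2 ≤ ν (powerSumUpTo (p - 1) m - p * bernoulli m) := by
  have h := powerSumUpTo_sub_mul_bernoulli (n := p - 1) hm0
  rw [Nat.sub_add_cancel hp.out.one_le] at h
  rw [h]
  refine AddValuation.map_le_sum _ fun i hi => ?_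
  have hi' := mem_range.mp hi
  have hm1 : ν ((m : ℚ) + 1) = 0 := by
    exact_mod_cast padicAddVal_natCast_of_pos_of_lt (p := p) (n := m + 1) (by omega) (by omega)
  rw [AddValuation.map_div, hm1, sub_zero, AddValuation.map_mul, AddValuation.map_mul,
    padicAddVal_pow_self]
  calc (2 : WithTop ℤ) = 0 + 0 + ((2 : ℤ) : WithTop ℤ) := by norm_num
    _ ≤ _ := add_le_add (add_le_add (hB i hi') (padicAddVal_natCast_nonneg _))
      (WithTop.coe_le_coe.mpr (by omega))

theorem padicAddVal_bernoulli_nonneg {m : ℕ} (hm : m ≤ p - 2) : 0 ≤ ν (bernoulli m) := by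
  induction m using Nat.strong_induction_on with
  | _ m ih =>
  rcases eq_or_ne m 0 with rfl | hm0
  · simp
  have hdiff := two_le_padicAddVal_powerSumUpTo_sub_mul_bernoulli hm0 hm fun i hi =>
    ih i hi (by omega)
  have hS := one_le_padicAddVal_powerSumUpTo (p := p) hm0 (by omega)
  have h := AddValuation.map_sub _ _ _ |>.trans' (le_min hS (one_le_two.trans hdiff))
  rw [sub_sub_cancel, AddValuation.map_mul, padicAddVal_self] at h
  exact (WithTop.add_le_add_iff_left WithTop.one_ne_top).mp (by rwa [add_zero])

theorem padicValRat_bernoulli_nonneg {m : ℕ} (hm : m ≤ p - 2) :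
    0 ≤ padicValRat p (bernoulli m) := by
  rcases eq_or_ne (bernoulli m) 0 with h0 | h0
  · simp [h0]
  · have h := padicAddVal_bernoulli_nonneg (p := p) hm
    rw [padicAddVal_of_ne_zero h0] at h
    exact_mod_cast h

theorem min_padicAddVal_esymmUpTo_two {j : ℕ} (hj1 : 1 ≤ j) (hj : j ≤ p - 2) :
    min (ν (esymmUpTo (p - 1) j)) 2 = min (ν (bernoulli j) + 1) 2 := by
  have hNewton := two_le_padicAddVal_mul_esymmUpTo_sub_of_forall hj1 hj fun a ha =>
    one_le_padicAddVal_esymmUpTo (mem_Ico.mp ha).1 (by have := (mem_Ico.mp ha).2; omega)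
  have hFaulhaber : 2 ≤ ν ((-1) ^ (j + 1) * (powerSumUpTo (p - 1) j - p * bernoulli j)) := by
    rw [AddValuation.map_mul, padicAddVal_neg_one_pow, zero_add]
    exact two_le_padicAddVal_powerSumUpTo_sub_mul_bernoulli (by omega) hj fun i _ =>
      padicAddVal_bernoulli_nonneg (by omega)
  have h := AddValuation.min_map_eq_of_le_map_sub _ <|
    (AddValuation.map_le_add _ hNewton hFaulhaber).trans_eq (congrArg ν (by ring) :
      ν (_ + _) = ν (j * esymmUpTo (p - 1) j - (-1) ^ (j + 1) * (p * bernoulli j)))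
  rwa [AddValuation.map_mul, padicAddVal_natCast_of_pos_of_lt (by omega) (by omega), zero_add,
    AddValuation.map_mul, padicAddVal_neg_one_pow, zero_add, AddValuation.map_mul,
    padicAddVal_self, add_comm] at h

theorem min_padicAddVal_esymmUpTo_three (hp2 : p ≠ 2) {j : ℕ} (hj3 : 3 ≤ j) (hj : j ≤ p - 2)
    (hjo : Odd j) :
    min (ν (esymmUpTo (p - 1) j)) 3 = min (ν (esymmUpTo (p - 1) (j - 1)) + 1) 3 := by
  obtain ⟨t, ht⟩ := hp.out.odd_of_ne_two hp2
  set m := p - 1 - j with hm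
  have hmo : Odd m := by obtain ⟨s, hs⟩ := hjo; exact ⟨t - s - 1, by omega⟩
  have h := shiftedPochhammer_coeff_reflect (n := p - 1) ⟨t, by omega⟩ m
  rw [show p - 1 - m + 1 = (j - 1) + 2 by omega, sum_range_succ', sum_range_succ',
    Nat.cast_pred hp.out.pos, sub_add_cancel, hmo.neg_one_pow] at h
  simp only [zero_add, pow_zero, pow_one, mul_one, Nat.choose_self, Nat.cast_one, one_mul,
    add_comm 1 m, Nat.choose_succ_self_right] at h
  set q := (shiftedPochhammer (p - 1)).coeff with hq
  have hkey : 2 * q m - (m + 1 : ℕ) * p * q (m + 1) = -∑ i ∈ range (j - 1),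
      ((i + 1 + 1 + m).choose m : ℚ) * q (i + 1 + 1 + m) * (-(p : ℚ)) ^ (i + 1 + 1) := by
    push_cast at h ⊢
    linear_combination h
  have htail : 3 ≤ ν (2 * q m - (m + 1 : ℕ) * p * q (m + 1)) := by
    rw [hkey, AddValuation.map_neg]
    refine AddValuation.map_le_sum _ fun i hi => ?_
    have hi' := mem_range.mp hi
    rw [AddValuation.map_mul, AddValuation.map_mul, AddValuation.map_pow, AddValuation.map_neg,
      padicAddVal_self, nsmul_one, show q (i + 1 + 1 + m) = esymmUpTo (p - 1) (j - 2 - i) by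
        rw [hq, shiftedPochhammer_coeff (by omega)]; congr 1; omega]
    rcases lt_or_eq_of_le (show i + 2 ≤ j by omega) with hlt | heq
    · calc (3 : WithTop ℤ) = 0 + 1 + ((2 : ℕ) : WithTop ℤ) := by norm_num
        _ ≤ _ := add_le_add (add_le_add (padicAddVal_natCast_nonneg _)
            (one_le_padicAddVal_esymmUpTo (by omega) (by omega))) (by exact_mod_cast (by omega))
    · rw [show j - 2 - i = 0 by omega, esymmUpTo_zero, AddValuation.map_one]
      calc (3 : WithTop ℤ) = 0 + 0 + ((3 : ℕ) : WithTop ℤ) := by norm_num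
        _ ≤ _ := add_le_add (add_le_add_left (padicAddVal_natCast_nonneg _) _)
            (by exact_mod_cast (by omega))
  have h3 := AddValuation.min_map_eq_of_le_map_sub _ htail
  have h2 : ν 2 = 0 := by
    exact_mod_cast padicAddVal_natCast_of_pos_of_lt (p := p) (n := 2) (by omega) (by omega)
  rwa [AddValuation.map_mul, AddValuation.map_mul, AddValuation.map_mul, h2,
    padicAddVal_natCast_of_pos_of_lt (by omega) (by omega), padicAddVal_self, zero_add, zero_add,
    add_comm, hq, shiftedPochhammer_coeff (by omega), shiftedPochhammer_coeff (by omega),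
    show p - 1 - m = j by omega, show p - 1 - (m + 1) = j - 1 by omega] at h3

theorem min_padicAddVal_stirlingFirst_two {k : ℕ} (hk2 : 2 ≤ k) (hk : k ≤ p - 1) :
    min (ν (stirlingFirst p k)) 2 = min (ν (bernoulli (p - k)) + 1) 2 := by
  rw [stirlingFirst_eq_esymmUpTo (by omega) (by omega)]
  exact min_padicAddVal_esymmUpTo_two (by omega) (by omega)

theorem min_padicAddVal_stirlingFirst_three (hp2 : p ≠ 2) {k : ℕ} (hk2 : 2 ≤ k)
    (hk : k ≤ p - 3) (hke : Even k) :
    min (ν (stirlingFirst p k)) 3 = min (ν (bernoulli (p - 1 - k)) + 2) 3 := by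
  obtain ⟨t, ht⟩ := hp.out.odd_of_ne_two hp2
  obtain ⟨r, rfl⟩ := hke
  rw [stirlingFirst_eq_esymmUpTo (by omega) (by omega),
    min_padicAddVal_esymmUpTo_three hp2 (by omega) (by omega) ⟨t - r, by omega⟩]
  calc min (ν (esymmUpTo (p - 1) (p - (r + r) - 1)) + 1) 3
      = min (ν (esymmUpTo (p - 1) (p - (r + r) - 1))) 2 + 1 := by
        rw [← min_add_add_right]; norm_num
    _ = min (ν (bernoulli (p - 1 - (r + r))) + 2) 3 := by
        rw [min_padicAddVal_esymmUpTo_two (by omega) (by omega), ← min_add_add_right,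
          show p - (r + r) - 1 = p - 1 - (r + r) by omega, add_assoc]
        norm_num

end Estimates

theorem stmt15_general (p k : ℕ) (hp : p.Prime)
    (hk2 : 2 ≤ k) (hk : k ≤ p - 2) :
    padicValNat p (stirlingFirst p k) ≥ 1 + (if Even (k - 1) then 0 else 1) ∧
    (padicValNat p (stirlingFirst p k) = 1 + (if Even (k - 1) then 0 else 1) ↔
      padicValRat p (bernoulli (p - 1 - 2 * (k / 2))) = 0) := by
  have := Fact.mk hp
  have hp2 : p ≠ 2 := by omega
  obtain ⟨t, ht⟩ := hp.odd_of_ne_two hp2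
  obtain ⟨j, hj⟩ : ∃ j, p - 1 - 2 * (k / 2) = j := ⟨_, rfl⟩
  rw [hj]
  have hs := padicAddVal_natCast_of_ne_zero (p := p)
    (stirlingFirst_ne_zero (n := p) (k := k) (by omega) (by omega))
  have hB := padicAddVal_of_ne_zero (p := p)
    (bernoulli_ne_zero_of_even (n := j) ⟨t - k / 2, by omega⟩)
  have hB0 := padicValRat_bernoulli_nonneg (p := p) (m := j) (by omega)
  rcases Nat.even_or_odd k with ⟨r, rfl⟩ | ⟨r, rfl⟩
  · have h := min_padicAddVal_stirlingFirst_three hp2 hk2 (by omega) ⟨r, rfl⟩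
    rw [show p - 1 - (r + r) = j by omega, hs, hB] at h
    simp only [← WithTop.coe_ofNat, ← WithTop.coe_add, ← WithTop.coe_min,
      WithTop.coe_inj] at h
    have : ¬ Even (r + r - 1) := Nat.not_even_iff_odd.mpr ⟨r - 1, by omega⟩
    simp only [this, if_false]
    omega
  · have h := min_padicAddVal_stirlingFirst_two (p := p) hk2 (by omega)
    rw [show p - (2 * r + 1) = j by omega, hs, hB] at h
    simp only [← WithTop.coe_one, ← WithTop.coe_ofNat, ← WithTop.coe_add, ← WithTop.coe_min,
      WithTop.coe_inj] at h
    simp only [Nat.add_sub_cancel, even_two_mul, if_true]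
    omega

theorem stmt15 (p k : ℕ) (hp : p.Prime) (hp5 : 5 ≤ p)
    (hk2 : 2 ≤ k) (hk : k ≤ p - 2) :
    padicValNat p (stirlingFirst p k) ≥ 1 + (if Even (k - 1) then 0 else 1) ∧
    (padicValNat p (stirlingFirst p k) = 1 + (if Even (k - 1) then 0 else 1) ↔
      padicValRat p (bernoulli (p - 1 - 2 * (k / 2))) = 0) :=
  stmt15_general p k hp hk2 hk
end

section
/- Let p ≥ 5 be a prime and let a and l be integers with 2 ≤ a ≤ p-1 and 1 ≤ l ≤ a. Then s(ap, ap - l(p-1)) ≡ C(a,l)·s(p,1)^l (mod p^2), where C(a,l) denotes the binomial coefficient a choose l. -/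
open Polynomial

theorem Nat.eq_one_or_lt_of_modEq_one {j q : ℕ} (hq : 2 ≤ q) (hj : j ≡ 1 [MOD q]) :
    j = 1 ∨ q < j := by
  have hj' : j % q = 1 := by rw [hj, Nat.mod_eq_of_lt (by omega)]
  rcases Nat.lt_or_ge j q with h | h
  · rw [Nat.mod_eq_of_lt h] at hj'
    exact .inl hj'
  · rcases h.eq_or_lt with rfl | h
    · simp at hj'
    · exact .inr h

theorem Finset.prod_add_mul_of_sq_eq_zero {R ι : Type*} [CommRing R] (s : Finset ι) (x ε : R)
    (y : ι → R) (hε : ε ^ 2 = 0) :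
    ∏ i ∈ s, (x + ε * y i) = x ^ s.card + ε * x ^ (s.card - 1) * ∑ i ∈ s, y i := by
  classical
  induction s using Finset.induction_on with
  | empty => simp
  | insert i s hi ih =>
    rw [Finset.prod_insert hi, ih, Finset.card_insert_of_notMem hi, Finset.sum_insert hi]
    rcases s.eq_empty_or_nonempty with rfl | hs
    · simp
    · obtain ⟨n, hn⟩ : ∃ n, s.card = n + 1 := ⟨s.card - 1, by have := hs.card_pos; omega⟩
      rw [hn, Nat.add_sub_cancel, Nat.add_sub_cancel]
      linear_combination (x ^ n * y i * ∑ i ∈ s, y i) * hε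

namespace Polynomial

variable {R : Type*} [CommRing R]

theorem comp_X_add_C_of_sq_eq_zero (f : R[X]) {ε : R} (hε : ε ^ 2 = 0) :
    f.comp (X + C ε) = f + C ε * derivative f := by
  have hCε : (C ε) ^ 2 = 0 := by rw [← C_pow, hε, C_0]
  rw [comp_eq_aeval, aeval_add_of_sq_eq_zero _ _ _ hCε, aeval_X_left_apply, aeval_X_left_apply,
    mul_comm]

theorem coeff_expand_mul_eq_zero {q n : ℕ} (hq : 0 < q) (H F : R[X])
    (hF : ∀ j, j ≡ n [MOD q] → F.coeff j = 0) : (expand R q H * F).coeff n = 0 := by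
  rw [coeff_mul]
  refine Finset.sum_eq_zero fun ⟨i, j⟩ hij => ?_
  rw [Finset.HasAntidiagonal.mem_antidiagonal] at hij
  rw [coeff_expand hq]
  split_ifs with hdvd
  · obtain ⟨m, rfl⟩ := hdvd
    rw [hF j (by rw [← hij]; exact (Nat.mul_add_mod_self_left ..).symm), mul_zero]
  · exact zero_mul _

theorem X_pow_succ_add_C_mul_X (q : ℕ) (c : R) :
    X ^ (q + 1) + C c * X = X * expand R q (X + C c) := by
  rw [map_add, expand_X, expand_C]
  ring

theorem coeff_X_mul_expand_X_add_C_pow {q : ℕ} (hq : 0 < q) (c : R) (n k : ℕ) :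
    ((X * expand R q (X + C c)) ^ n).coeff (n + q * k) = n.choose k * c ^ (n - k) := by
  rw [mul_pow, ← map_pow, add_comm n, coeff_X_pow_mul, coeff_expand hq, if_pos (dvd_mul_right q k),
    Nat.mul_div_cancel_left _ hq, coeff_X_add_C_pow, mul_comm]

end Polynomial

theorem ascPochhammer_mul_eq_prod_comp (S : Type*) [CommSemiring S] (a m : ℕ) :
    ascPochhammer S (a * m) =
      ∏ i ∈ Finset.range a, (ascPochhammer S m).comp (X + ((i * m : ℕ) : S[X])) := by
  induction a with
  | zero => simp
  | succ a ih => rw [Finset.prod_range_succ, ← ih, add_mul, one_mul, ← ascPochhammer_mul]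

theorem isMonicOfDegree_ascPochhammer (S : Type*) [Semiring S] [Nontrivial S]
    [NoZeroDivisors S] (n : ℕ) : IsMonicOfDegree (ascPochhammer S n) n :=
  ⟨ascPochhammer_natDegree S n, monic_ascPochhammer S n⟩

theorem ascPochhammer_zmod_eq_X_pow_sub_X (p : ℕ) [Fact p.Prime] :
    ascPochhammer (ZMod p) p = X ^ p - X := by
  have hp : p.Prime := Fact.out
  refine sub_eq_zero.mp (eq_zero_of_natDegree_lt_card_of_eval_eq_zero _ Function.injective_id
    (fun x => ?_) ?_)
  · have hroot : (ascPochhammer (ZMod p) p).eval x = 0 := by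
      simpa using ascPochhammer_eval_neg_coe_nat_of_lt (R := ZMod p) (ZMod.val_lt (-x))
    simp [hroot, ZMod.pow_card]
  · rw [ZMod.card]
    exact (isMonicOfDegree_ascPochhammer _ p).natDegree_sub_lt hp.ne_zero
      ((isMonicOfDegree_X_pow _ p).sub (by rw [natDegree_X]; exact hp.one_lt))

theorem exists_ascPochhammer_int_prime_eq (p : ℕ) [Fact p.Prime] :
    ∃ D : ℤ[X], ascPochhammer ℤ p = X ^ p + C ((ascPochhammer ℤ p).coeff 1) * X + C (p : ℤ) * D ∧
      D.coeff 1 = 0 ∧ D.natDegree < p := by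
  have hp : p.Prime := Fact.out
  set c := (ascPochhammer ℤ p).coeff 1
  set P := ascPochhammer ℤ p - (X ^ p + C c * X) with hP
  have hc : (c : ZMod p) = -1 := by
    calc (c : ZMod p) = (ascPochhammer (ZMod p) p).coeff 1 := by
          rw [← ascPochhammer_map (Int.castRingHom (ZMod p)), coeff_map, eq_intCast]
      _ = -1 := by
          rw [ascPochhammer_zmod_eq_X_pow_sub_X, coeff_sub, coeff_X_pow, if_neg hp.one_lt.ne,
            coeff_X_one, zero_sub]
  have hPmod : P.map (Int.castRingHom (ZMod p)) = 0 := by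
    simp only [hP, Polynomial.map_sub, Polynomial.map_add, Polynomial.map_mul, Polynomial.map_pow,
      map_X, map_C, ascPochhammer_map, ascPochhammer_zmod_eq_X_pow_sub_X, Int.coe_castRingHom, hc,
      map_neg, C_1]
    ring
  obtain ⟨D, hD⟩ : C (p : ℤ) ∣ P := (C_dvd_iff_dvd_coeff _ _).mpr fun i => by
    rw [← ZMod.intCast_zmod_eq_zero_iff_dvd, ← eq_intCast (Int.castRingHom (ZMod p)), ← coeff_map,
      hPmod, coeff_zero]
  have hp0 : (p : ℤ) ≠ 0 := by exact_mod_cast hp.ne_zero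
  refine ⟨D, by rw [← hD, hP]; ring, ?_, ?_⟩
  · have : P.coeff 1 = 0 := by simp [hP, coeff_X_pow, hp.one_lt.ne, c]
    rwa [hD, coeff_C_mul, mul_eq_zero, or_iff_right hp0] at this
  · have : P.natDegree < p := (isMonicOfDegree_ascPochhammer ℤ p).natDegree_sub_lt hp.ne_zero
      ((isMonicOfDegree_X_pow ℤ p).add_right
        ((natDegree_C_mul_le c X).trans_lt (by rw [natDegree_X]; exact hp.one_lt)))
    rwa [hD, natDegree_C_mul hp0] at this

theorem exists_ascPochhammer_prime_eq (S : Type*) [CommRing S] (p : ℕ) [Fact p.Prime] :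
    ∃ D : S[X], ascPochhammer S p = X ^ p + C ((ascPochhammer S p).coeff 1) * X + C (p : S) * D ∧
      D.coeff 1 = 0 ∧ D.natDegree < p := by
  obtain ⟨D, hD, hD1, hDdeg⟩ := exists_ascPochhammer_int_prime_eq p
  refine ⟨D.map (Int.castRingHom S), ?_, by rw [coeff_map, hD1, map_zero],
    natDegree_map_le.trans_lt hDdeg⟩
  have hc : (ascPochhammer S p).coeff 1 = ((ascPochhammer ℤ p).coeff 1 : S) := by
    rw [← ascPochhammer_map (Int.castRingHom S), coeff_map, Int.coe_castRingHom]
  have := congrArg (map (Int.castRingHom S)) hD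
  simpa only [hc, ascPochhammer_map, Polynomial.map_add, Polynomial.map_mul, Polynomial.map_pow,
    map_X, map_C, Int.coe_castRingHom, Int.cast_natCast] using this

theorem ascPochhammer_mul_eq_of_sq_eq_zero {S : Type*} [CommRing S] {p : ℕ} (hS : (p : S) ^ 2 = 0)
    {c : S} {D : S[X]} (hD : ascPochhammer S p = X ^ p + C c * X + C (p : S) * D) (a : ℕ) :
    ascPochhammer S (a * p) = (X ^ p + C c * X) ^ a +
      C (p : S) * (X ^ p + C c * X) ^ (a - 1) * ∑ i ∈ Finset.range a, (D + C (i * c)) := by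
  have hCp : (C (p : S)) ^ 2 = 0 := by rw [← C_pow, hS, C_0]
  have hcomp (i : ℕ) : (ascPochhammer S p).comp (X + ((i * p : ℕ) : S[X])) =
      X ^ p + C c * X + C (p : S) * (D + C (i * c)) := by
    have hδ : ((i * p : ℕ) : S) ^ 2 = 0 := by rw [Nat.cast_mul, mul_pow, hS, mul_zero]
    rw [← C_eq_natCast, comp_X_add_C_of_sq_eq_zero _ hδ, hD]
    simp only [derivative_add, derivative_X_pow, derivative_mul, derivative_C, derivative_X,
      zero_mul, zero_add, Nat.cast_mul, C_mul]
    linear_combination (C (i : S) * (X ^ (p - 1) + derivative D)) * hCp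
  rw [ascPochhammer_mul_eq_prod_comp, Finset.prod_congr rfl fun i _ => hcomp i,
    Finset.prod_add_mul_of_sq_eq_zero _ _ _ _ hCp, Finset.card_range, mul_assoc]

theorem coeff_ascPochhammer_mul_prime {S : Type*} [CommRing S] {p : ℕ} [Fact p.Prime] (hp : 3 ≤ p)
    (hS : (p : S) ^ 2 = 0) {a : ℕ} (ha : 1 ≤ a) (k : ℕ) :
    (ascPochhammer S (a * p)).coeff (a + (p - 1) * k) =
      a.choose k * ((ascPochhammer S p).coeff 1) ^ (a - k) := by
  obtain ⟨D, hD, hD1, hDdeg⟩ := exists_ascPochhammer_prime_eq S p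
  set c := (ascPochhammer S p).coeff 1
  obtain ⟨q, rfl⟩ : ∃ q, p = q + 1 := ⟨p - 1, by omega⟩
  obtain ⟨b, rfl⟩ : ∃ b, a = b + 1 := ⟨a - 1, by omega⟩
  have hq : 0 < q := by omega
  have hF : ∀ j, j ≡ 1 + q * k [MOD q] →
      (∑ i ∈ Finset.range (b + 1), (D + C (i * c))).coeff j = 0 := by
    intro j hj
    have hj := Nat.eq_one_or_lt_of_modEq_one (by omega) (hj.trans (Nat.add_mul_mod_self_left 1 q k))
    have hDj : D.coeff j = 0 := hj.elim (· ▸ hD1) fun h => coeff_eq_zero_of_natDegree_lt (by omega)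
    rw [finsetSum_coeff]
    refine Finset.sum_eq_zero fun i _ => ?_
    rw [coeff_add, hDj, coeff_C, if_neg (by omega), add_zero]
  have hcorrection : (C ((q + 1 : ℕ) : S) * (X * expand S q (X + C c)) ^ b *
      ∑ i ∈ Finset.range (b + 1), (D + C (i * c))).coeff (b + 1 + q * k) = 0 := by
    rw [mul_assoc, coeff_C_mul, mul_pow, ← map_pow, mul_assoc,
      show b + 1 + q * k = 1 + q * k + b by ring, coeff_X_pow_mul,
      coeff_expand_mul_eq_zero hq _ _ hF, mul_zero]
  rw [ascPochhammer_mul_eq_of_sq_eq_zero hS hD, Nat.add_sub_cancel, Nat.add_sub_cancel,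
    X_pow_succ_add_C_mul_X, coeff_add, coeff_X_mul_expand_X_add_C_pow hq, hcorrection, add_zero]

theorem natCast_stirlingFirst (S : Type*) [Semiring S] (n k : ℕ) :
    (stirlingFirst n k : S) = (ascPochhammer S n).coeff k := by
  rw [stirlingFirst, ← ascPochhammer_map (Nat.castRingHom S), coeff_map, eq_natCast]

theorem stmt18_general (p a l : ℕ) (hp : p.Prime) (hp5 : 5 ≤ p)
    (hl1 : 1 ≤ l) (hl2 : l ≤ a) :
    stirlingFirst (a * p) (a * p - l * (p - 1)) ≡
      Nat.choose a l * (stirlingFirst p 1) ^ l [MOD p ^ 2] := by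
  have := Fact.mk hp
  have hS : (p : ZMod (p ^ 2)) ^ 2 = 0 := by rw [← Nat.cast_pow, ZMod.natCast_self]
  have hN : a * p - l * (p - 1) = a + (p - 1) * (a - l) := by
    obtain ⟨q, rfl⟩ : ∃ q, p = q + 1 := ⟨p - 1, by omega⟩
    have : q * l ≤ q * a := Nat.mul_le_mul_left q hl2
    rw [Nat.add_sub_cancel, Nat.mul_sub, mul_add, mul_one, mul_comm l q, mul_comm a q]
    omega
  rw [← ZMod.natCast_eq_natCast_iff, hN, Nat.cast_mul, Nat.cast_pow, natCast_stirlingFirst,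
    natCast_stirlingFirst, coeff_ascPochhammer_mul_prime (by omega) hS (by omega),
    Nat.choose_symm hl2, Nat.sub_sub_self hl2]

theorem stmt18 (p a l : ℕ) (hp : p.Prime) (hp5 : 5 ≤ p)
    (ha2 : 2 ≤ a) (ha : a ≤ p - 1) (hl1 : 1 ≤ l) (hl2 : l ≤ a) :
    stirlingFirst (a * p) (a * p - l * (p - 1)) ≡
      Nat.choose a l * (stirlingFirst p 1) ^ l [MOD p ^ 2] :=
  stmt18_general p a l hp hp5 hl1 hl2
end
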